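/- Let r ≥ 2 be an integer and let K₁ : ℝ → ℝ be integrable with ∫ tʲ K₁(t) dt = 0 for every integer j with 1 ≤ j ≤ r − 1, and ∫ |t|^r |K₁(t)| dt < ∞. Let f : ℝ → ℝ be (r−1)-times differentiable with f^{(r-1)} bounded and continuous. Then for every b ∈ ℝ, h^{1-r} ∫ t K₁(t) f(h t + b) dt converges, as h → 0⁺, to (f^{(r-1)}(b) / (r−1)!) ∫ t^r K₁(t) dt. -/

import Mathlib

/-!
Write `f (b + u)` as its Taylor polynomial of order `n = r - 1` at `b` plus a remainder `R u`.
Integrated against `t K₁(t)` at `u = h t`, the polynomial keeps only its top coefficient, since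
the moments of orders `1, …, n` vanish; this is exactly `h ^ n f⁽ⁿ⁾(b) / n! ∫ t ^ r K₁`.
The remainder is `o(u ^ n)` at `0` and, by the Lagrange form and the bound on `f⁽ⁿ⁾`, at most
`2 M |u| ^ n / n!` everywhere, so `h⁻ⁿ ∫ t K₁(t) R(h t) dt → 0` by dominated convergence with a
multiple of `|t| ^ r |K₁ t|` as dominating function.
-/

open MeasureTheory Filter Set Asymptotics Topology
open scoped Nat

section Taylor

variable {f : ℝ → ℝ} {n : ℕ}

theorem taylorWithinEval_univ_apply (f : ℝ → ℝ) (n : ℕ) (b x : ℝ) :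
    taylorWithinEval f n univ b x =
      ∑ k ∈ Finset.range (n + 1), iteratedDeriv k f b / k ! * (x - b) ^ k := by
  rw [taylor_within_apply]
  refine Finset.sum_congr rfl fun k _ ↦ ?_
  rw [iteratedDerivWithin_univ, smul_eq_mul]
  ring

theorem taylorWithinEval_uIcc_eq_univ (hf : ContDiff ℝ n f) {b x : ℝ} (hbx : b ≠ x) :
    taylorWithinEval f n (uIcc b x) b x = taylorWithinEval f n univ b x := by
  simp only [taylor_within_apply, iteratedDerivWithin_univ]
  refine Finset.sum_congr rfl fun k hk ↦ ?_
  rw [iteratedDerivWithin_eq_iteratedDeriv (uniqueDiffOn_uIcc hbx)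
    (hf.contDiffAt.of_le (by exact_mod_cast Finset.mem_range_succ_iff.1 hk)) left_mem_uIcc]

theorem abs_sub_taylorWithinEval_univ_le (hf : ContDiff ℝ n f) {b x C : ℝ}
    (hC : ∀ s ∈ uIcc b x, |iteratedDeriv n f s - iteratedDeriv n f b| ≤ C) :
    |f x - taylorWithinEval f n univ b x| ≤ C * |x - b| ^ n / n ! := by
  rcases eq_or_ne b x with rfl | hbx
  · have := hC b left_mem_uIcc
    rcases n with _ | n <;> simp_all
  cases n with
  | zero => simpa [taylor_within_zero_eval] using hC x right_mem_uIcc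
  | succ n =>
    obtain ⟨s, hs, hlagrange⟩ :=
      taylor_mean_remainder_lagrange_iteratedDeriv hbx (hf.contDiffOn (s := uIcc b x))
    rw [taylorWithinEval_uIcc_eq_univ hf.of_succ hbx] at hlagrange
    have hrem : f x - taylorWithinEval f (n + 1) univ b x =
        (iteratedDeriv (n + 1) f s - iteratedDeriv (n + 1) f b) * (x - b) ^ (n + 1) /
          (n + 1)! := by
      rw [taylorWithinEval_succ, iteratedDerivWithin_univ, sub_add_eq_sub_sub, hlagrange,
        smul_eq_mul, Nat.factorial_succ]
      push_cast
      ring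
    rw [hrem, abs_div, abs_mul, abs_pow, Nat.abs_cast]
    gcongr
    exact hC s (uIoo_subset_uIcc_self hs)

noncomputable def taylorRemainder (f : ℝ → ℝ) (n : ℕ) (b u : ℝ) : ℝ :=
  f (u + b) - taylorWithinEval f n univ b (u + b)

theorem continuous_taylorRemainder (hf : Continuous f) (n : ℕ) (b : ℝ) :
    Continuous (taylorRemainder f n b) := by
  unfold taylorRemainder
  simp only [taylorWithinEval_univ_apply]
  fun_prop

theorem abs_taylorRemainder_le (hf : ContDiff ℝ n f) {M : ℝ}
    (hM : ∀ x, |iteratedDeriv n f x| ≤ M) (b u : ℝ) :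
    |taylorRemainder f n b u| ≤ 2 * M / n ! * |u| ^ n := by
  have h := abs_sub_taylorWithinEval_univ_le hf (b := b) (x := u + b) (C := 2 * M)
    fun s _ ↦ (abs_sub _ _).trans (by linarith [hM s, hM b])
  simpa [taylorRemainder, div_mul_eq_mul_div] using h

theorem taylorRemainder_isLittleO (hf : ContDiff ℝ n f) (b : ℝ) :
    taylorRemainder f n b =o[𝓝 0] (· ^ n) := by
  have hshift : Tendsto (· + b) (𝓝 (0 : ℝ)) (𝓝 b) := by
    simpa using (continuous_add_const b).tendsto 0
  show (fun u ↦ f (u + b) - taylorWithinEval f n univ b (u + b)) =o[𝓝 0] (· ^ n)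
  simpa [Function.comp_def] using (taylor_isLittleO_univ hf).comp_tendsto hshift

end Taylor

section Rescaling

variable {w R : ℝ → ℝ} {n : ℕ} {C : ℝ}

theorem abs_mul_comp_mul_le (hRC : ∀ u, |R u| ≤ C * |u| ^ n) (h t : ℝ) :
    |w t * R (h * t)| ≤ C * |h| ^ n * (|t| ^ n * |w t|) :=
  calc |w t * R (h * t)| ≤ |w t| * (C * |h * t| ^ n) := by
        rw [abs_mul]; exact mul_le_mul_of_nonneg_left (hRC _) (abs_nonneg _)
    _ = C * |h| ^ n * (|t| ^ n * |w t|) := by rw [abs_mul, mul_pow]; ring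

theorem integrable_mul_comp_mul (hw : AEStronglyMeasurable w)
    (hwn : Integrable fun t ↦ |t| ^ n * |w t|) (hR : Measurable R)
    (hRC : ∀ u, |R u| ≤ C * |u| ^ n) (h : ℝ) : Integrable fun t ↦ w t * R (h * t) :=
  (hwn.const_mul (C * |h| ^ n)).mono'
    (hw.mul (hR.comp (measurable_const_mul h)).aestronglyMeasurable)
    (Eventually.of_forall fun t ↦ abs_mul_comp_mul_le hRC h t)

theorem tendsto_inv_pow_mul_integral_mul_comp_mul (hw : AEStronglyMeasurable w)
    (hwn : Integrable fun t ↦ |t| ^ n * |w t|) (hR : Measurable R)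
    (hRC : ∀ u, |R u| ≤ C * |u| ^ n) (hRo : R =o[𝓝 0] (· ^ n)) :
    Tendsto (fun h ↦ (h ^ n)⁻¹ * ∫ t, w t * R (h * t)) (𝓝[≠] 0) (𝓝 0) := by
  simp_rw [← integral_const_mul]
  have hlim : ∀ t, Tendsto (fun h ↦ (h ^ n)⁻¹ * (w t * R (h * t))) (𝓝[≠] 0) (𝓝 0) := by
    intro t
    have hscale : Tendsto (· * t) (𝓝[≠] (0 : ℝ)) (𝓝 0) := by
      simpa using ((continuous_mul_const t).tendsto 0).mono_left nhdsWithin_le_nhds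
    have hsmall : (fun h ↦ R (h * t)) =o[𝓝[≠] 0] (· ^ n) :=
      (hRo.comp_tendsto hscale).trans_isBigO <| by
        simpa [Function.comp_def, mul_pow, mul_comm] using
          isBigO_const_mul_self (t ^ n) (· ^ n : ℝ → ℝ) (𝓝[≠] 0)
    simpa [div_eq_inv_mul, mul_left_comm] using hsmall.tendsto_div_nhds_zero.const_mul (w t)
  have hbound : ∀ᶠ h in 𝓝[≠] 0, ∀ᵐ t, ‖(h ^ n)⁻¹ * (w t * R (h * t))‖ ≤ C * (|t| ^ n * |w t|) :=
    eventually_nhdsWithin_of_forall fun h (hh : h ≠ 0) ↦ Eventually.of_forall fun t ↦ by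
      rw [Real.norm_eq_abs, abs_mul, abs_inv, abs_pow]
      calc (|h| ^ n)⁻¹ * |w t * R (h * t)| ≤ (|h| ^ n)⁻¹ * (C * |h| ^ n * (|t| ^ n * |w t|)) :=
            mul_le_mul_of_nonneg_left (abs_mul_comp_mul_le hRC h t) (by positivity)
        _ = C * (|t| ^ n * |w t|) := by field_simp
  simpa using tendsto_integral_filter_of_dominated_convergence _
    (Eventually.of_forall fun h ↦
      (hw.mul (hR.comp (measurable_const_mul h)).aestronglyMeasurable).const_mul _)
    hbound (hwn.const_mul C) (Eventually.of_forall hlim)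

end Rescaling

section Moments

variable {K : ℝ → ℝ} {n : ℕ}

theorem pow_abs_le_one_add_pow_abs {j r : ℕ} (hj : j ≤ r) (t : ℝ) : |t| ^ j ≤ 1 + |t| ^ r := by
  rcases le_total |t| 1 with ht | ht
  · linarith [pow_le_one₀ (abs_nonneg t) ht (n := j), pow_nonneg (abs_nonneg t) r]
  · linarith [pow_le_pow_right₀ ht hj]

theorem integrable_pow_mul_of_integrable_abs_pow_mul {r : ℕ} (hK : Integrable K)
    (hKr : Integrable fun t ↦ |t| ^ r * |K t|) {j : ℕ} (hj : j ≤ r) :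
    Integrable fun t ↦ t ^ j * K t := by
  refine (hK.abs.add hKr).mono' ((continuous_pow j).aestronglyMeasurable.mul hK.1)
    (Eventually.of_forall fun t ↦ ?_)
  rw [Real.norm_eq_abs, abs_mul, abs_pow]
  calc |t| ^ j * |K t| ≤ (1 + |t| ^ r) * |K t| :=
        mul_le_mul_of_nonneg_right (pow_abs_le_one_add_pow_abs hj t) (abs_nonneg _)
    _ = |K t| + |t| ^ r * |K t| := by ring

theorem integral_sum_mul_pow_mul_eq_of_moment_eq_zero (a : ℕ → ℝ)
    (hint : ∀ k ≤ n, Integrable fun t ↦ t ^ (k + 1) * K t)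
    (hmom : ∀ k < n, ∫ t, t ^ (k + 1) * K t = 0) :
    ∫ t, ∑ k ∈ Finset.range (n + 1), a k * (t ^ (k + 1) * K t) =
      a n * ∫ t, t ^ (n + 1) * K t := by
  rw [integral_finsetSum _ fun k hk ↦ (hint k (Finset.mem_range_succ_iff.1 hk)).const_mul _,
    Finset.sum_range_succ, Finset.sum_eq_zero fun k hk ↦ ?_, zero_add, integral_const_mul]
  rw [integral_const_mul, hmom k (Finset.mem_range.1 hk), mul_zero]

theorem mul_mul_taylorWithinEval_univ_comp_eq_sum (f : ℝ → ℝ) (b h t : ℝ) :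
    t * K t * taylorWithinEval f n univ b (h * t + b) =
      ∑ k ∈ Finset.range (n + 1), iteratedDeriv k f b / k ! * h ^ k * (t ^ (k + 1) * K t) := by
  rw [taylorWithinEval_univ_apply, Finset.mul_sum]
  exact Finset.sum_congr rfl fun k _ ↦ by ring

theorem integral_mul_mul_comp_eq_remainder_add
    (hint : ∀ k ≤ n, Integrable fun t ↦ t ^ (k + 1) * K t)
    (hmom : ∀ k < n, ∫ t, t ^ (k + 1) * K t = 0) {f : ℝ → ℝ} {b h : ℝ}
    (hrem : Integrable fun t ↦ t * K t * taylorRemainder f n b (h * t)) :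
    ∫ t, t * K t * f (h * t + b) = (∫ t, t * K t * taylorRemainder f n b (h * t)) +
      iteratedDeriv n f b / n ! * h ^ n * ∫ t, t ^ (n + 1) * K t := by
  have hpoly : Integrable fun t ↦ t * K t * taylorWithinEval f n univ b (h * t + b) := by
    simp_rw [mul_mul_taylorWithinEval_univ_comp_eq_sum]
    exact integrable_finsetSum _ fun k hk ↦ (hint k (Finset.mem_range_succ_iff.1 hk)).const_mul _
  have hpoly_integral : ∫ t, t * K t * taylorWithinEval f n univ b (h * t + b) =
      iteratedDeriv n f b / n ! * h ^ n * ∫ t, t ^ (n + 1) * K t := by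
    simp_rw [mul_mul_taylorWithinEval_univ_comp_eq_sum]
    exact integral_sum_mul_pow_mul_eq_of_moment_eq_zero _ hint hmom
  rw [← hpoly_integral, ← integral_add hrem hpoly]
  congr with t
  simp only [taylorRemainder]
  ring

end Moments

/-- Exact kernel bias for the density term: if `K₁` has vanishing moments of orders
`1, …, r − 1` and a finite absolute `r`-th moment, and `f` is `(r−1)`-times
differentiable with bounded continuous `(r−1)`-th derivative, then as `h → 0⁺`,
`h^{1−r} ∫ t K₁(t) f(ht + b) dt → (f^{(r−1)}(b) / (r−1)!) ∫ t^r K₁(t) dt`. -/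
theorem kernel_density_bias_limit
    (r : ℕ) (hr : 2 ≤ r) (K₁ : ℝ → ℝ) (hK₁ : Integrable K₁)
    (hmom : ∀ j : ℕ, 1 ≤ j → j ≤ r - 1 → ∫ t, t ^ j * K₁ t = 0)
    (hKr : Integrable (fun t => |t| ^ r * |K₁ t|))
    (f : ℝ → ℝ) (M : ℝ)
    (hdiff : ∀ i < r - 1, Differentiable ℝ (iteratedDeriv i f))
    (hM : ∀ x, |iteratedDeriv (r - 1) f x| ≤ M)
    (hcont : Continuous (iteratedDeriv (r - 1) f)) :
    ∀ b : ℝ,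
      Tendsto (fun h : ℝ => (h ^ (r - 1))⁻¹ * ∫ t, t * K₁ t * f (h * t + b))
        (nhdsWithin 0 (Set.Ioi 0))
        (nhds ((iteratedDeriv (r - 1) f b / (r - 1).factorial) * ∫ t, t ^ r * K₁ t)) := by
  intro b
  obtain ⟨n, rfl⟩ : ∃ n, r = n + 1 := ⟨r - 1, by omega⟩
  simp only [Nat.add_sub_cancel] at hmom hdiff hM hcont ⊢
  have hf : ContDiff ℝ n f := contDiff_nat_iff_iteratedDeriv.2
    ⟨fun m hm ↦ hm.eq_or_lt.elim (· ▸ hcont) fun hm ↦ (hdiff m hm).continuous, hdiff⟩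
  have hint : ∀ k ≤ n, Integrable fun t ↦ t ^ (k + 1) * K₁ t := fun k hk ↦
    integrable_pow_mul_of_integrable_abs_pow_mul hK₁ hKr (by omega)
  have hmom' : ∀ k < n, ∫ t, t ^ (k + 1) * K₁ t = 0 := fun k hk ↦ hmom (k + 1) (by omega) hk
  have hw : Integrable fun t ↦ |t| ^ n * |t * K₁ t| := by
    simpa [abs_mul, pow_succ, mul_assoc, mul_comm, mul_left_comm] using hKr
  have hwm : AEStronglyMeasurable fun t ↦ t * K₁ t := continuous_id.aestronglyMeasurable.mul hK₁.1
  have hR := (continuous_taylorRemainder hf.continuous n b).measurable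
  have hRC := abs_taylorRemainder_le hf hM b
  have hlim := ((tendsto_inv_pow_mul_integral_mul_comp_mul hwm hw hR hRC
    (taylorRemainder_isLittleO hf b)).mono_left (nhdsWithin_mono _ fun h (hh : 0 < h) ↦ hh.ne')
    ).add_const (iteratedDeriv n f b / n ! * ∫ t, t ^ (n + 1) * K₁ t)
  rw [zero_add] at hlim
  refine hlim.congr' (eventually_nhdsWithin_of_forall fun h (hh : 0 < h) ↦ ?_)
  dsimp only
  rw [integral_mul_mul_comp_eq_remainder_add hint hmom' (integrable_mul_comp_mul hwm hw hR hRC h),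
    mul_add]
  congr 1
  field_simp
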